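/- arXiv:2012.06931 — 2 statements merged into one kernel-verified Lean document; each statement's English description precedes it below -/
import Mathlib

section
/- On the trefoil braid variety X = {(z₁,z₂,z₃,z₄) ∈ ℂ⁴ : 1 + z₁z₂ + z₄(z₁ + z₃ + z₁z₂z₃) = 0}, the function z₁ + z₃ + z₁z₂z₃ never vanishes; consequently X is isomorphic (as a set, via forgetting z₄) to the open set {(z₁,z₂,z₃) ∈ ℂ³ : z₁ + z₃ + z₁z₂z₃ ≠ 0}. -/
/-!
The variety is the graph-like locus `{f + z₄ g = 0}` with `f = 1 + z₁z₂` and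
`g = z₁ + z₃ + z₁z₂z₃ = z₁ + z₃ f`. The two never vanish together: `f = g = 0` forces `z₁ = 0`,
and then `f = 1`. So over the locus `g ≠ 0` the equation has the unique solution `z₄ = -f / g`,
and over `g = 0` it has none.
-/

open Set

theorem Set.bijOn_fst_setOf_add_mul_eq_zero {α K : Type*} [Field K] (f g : α → K)
    (hfg : ∀ x, g x = 0 → f x ≠ 0) :
    BijOn Prod.fst {p : α × K | f p.1 + p.2 * g p.1 = 0} {x | g x ≠ 0} := by
  refine ⟨fun p hp hg => hfg p.1 hg ?_, ?_, fun x hx => ⟨(x, -f x / g x), ?_, rfl⟩⟩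
  · simpa [hg] using hp
  · rintro ⟨x, s⟩ (hs : f x + s * g x = 0) ⟨y, t⟩ (ht : f y + t * g y = 0) (rfl : x = y)
    have hg : g x ≠ 0 := fun hg => hfg x hg (by simpa [hg] using hs)
    have hst : s * g x = t * g x := by linear_combination hs - ht
    rw [mul_right_cancel₀ hg hst]
  · simp [div_mul_cancel₀ _ hx]

theorem trefoil_one_add_mul_ne_zero {R : Type*} [CommRing R] [Nontrivial R] {a b c : R}
    (h : a + c + a * b * c = 0) : 1 + a * b ≠ 0 := by
  intro hf
  have ha : a = 0 := by linear_combination h - c * hf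
  simp [ha] at hf

/-- On the trefoil braid variety `X = {1 + z₁z₂ + z₄(z₁ + z₃ + z₁z₂z₃) = 0} ⊆ ℂ⁴`,
the function `z₁ + z₃ + z₁z₂z₃` never vanishes, and forgetting `z₄` gives a bijection
of `X` onto the open set `{(z₁,z₂,z₃) : z₁ + z₃ + z₁z₂z₃ ≠ 0} ⊆ ℂ³`. -/
theorem trefoil_braid_variety_open_chart :
    (∀ z₁ z₂ z₃ z₄ : ℂ, 1 + z₁ * z₂ + z₄ * (z₁ + z₃ + z₁ * z₂ * z₃) = 0 →
      z₁ + z₃ + z₁ * z₂ * z₃ ≠ 0) ∧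
    Set.BijOn (fun p : ℂ × ℂ × ℂ × ℂ => (p.1, p.2.1, p.2.2.1))
      {p : ℂ × ℂ × ℂ × ℂ |
        1 + p.1 * p.2.1 + p.2.2.2 * (p.1 + p.2.2.1 + p.1 * p.2.1 * p.2.2.1) = 0}
      {q : ℂ × ℂ × ℂ | q.1 + q.2.2 + q.1 * q.2.1 * q.2.2 ≠ 0} := by
  let e : ℂ × ℂ × ℂ × ℂ ≃ (ℂ × ℂ × ℂ) × ℂ :=
    ⟨fun p => ((p.1, p.2.1, p.2.2.1), p.2.2.2), fun q => (q.1.1, q.1.2.1, q.1.2.2, q.2),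
      fun _ => rfl, fun _ => rfl⟩
  have chart := (bijOn_fst_setOf_add_mul_eq_zero (fun q : ℂ × ℂ × ℂ => 1 + q.1 * q.2.1)
    (fun q => q.1 + q.2.2 + q.1 * q.2.1 * q.2.2)
    (fun _ hg => trefoil_one_add_mul_ne_zero hg)).comp (e.bijOn fun _ => Iff.rfl)
  exact ⟨fun z₁ z₂ z₃ z₄ h => chart.mapsTo (show (z₁, z₂, z₃, z₄) ∈ _ from h), chart⟩
end

section
/- The 1212-relation for variable changes: applying to (z₁,z₂,z₃,z₄) the sequence 1212→2122→212→121 gives (z₄ + z₁⁻¹, z₃ + z₂z₄, z₂), and the sequence 1212→1121→121 gives the same tuple (z₄ + z₁⁻¹, z₃ + z₂z₄, z₂), assuming z₁ is invertible. -/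
variable {R : Type*} [CommRing R]

/-- Braid move `(a,b,c,d) ↦ (c, b - a*c, a, d)` on the first three positions (`1212 → 2122`). -/
def brA : R × R × R × R → R × R × R × R
  | (a, b, c, d) => (c, b - a * c, a, d)

/-- Opening the crossing at position 3 (whose variable `c` has inverse `cinv`), sliding the
triangular matrices: `(a,b,c,d) ↦ (b + a*c, a - (b + a*c)*c⁻¹, d + c⁻¹)` (`2122 → 212`). -/
def slideTri : R × R × R × R → R → R × R × R
  | (a, b, c, d), cinv => (b + a * c, a - (b + a * c) * cinv, d + cinv)

/-- Inverse braid move `(a,b,c) ↦ (c, b + a*c, a)` (`212 → 121`). -/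
def ibr : R × R × R → R × R × R
  | (a, b, c) => (c, b + a * c, a)

/-- Inverse braid move on the last three positions `(a,b,c,d) ↦ (a, d, c + b*d, b)`
(`1212 → 1121`). -/
def ibrB : R × R × R × R → R × R × R × R
  | (a, b, c, d) => (a, d, c + b * d, b)

/-- Trivalent-vertex move merging positions 1,2 (with `ainv` the inverse of the first
variable): `(a,b,c,d) ↦ (b + a⁻¹, c, d)` (`1121 → 121`). -/
def triA : R × R × R × R → R → R × R × R
  | (_, b, c, d), ainv => (b + ainv, c, d)

theorem slideTri_brA (z₁ z₂ z₃ z₄ c : R) :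
    slideTri (brA (z₁, z₂, z₃, z₄)) c = (z₂, z₃ - z₂ * c, z₄ + c) := by
  simp only [brA, slideTri, Prod.mk.injEq, and_true]
  constructor <;> ring

-- The value `c` substituted for `z₁⁻¹` cancels from the middle entry: `z₃ - z₂ c + z₂ (z₄ + c) = z₃ + z₂ z₄`.
theorem ibr_slideTri_brA (z₁ z₂ z₃ z₄ c : R) :
    ibr (slideTri (brA (z₁, z₂, z₃, z₄)) c) = (z₄ + c, z₃ + z₂ * z₄, z₂) := by
  rw [slideTri_brA, ibr]
  congr 2
  ring

theorem triA_ibrB (z₁ z₂ z₃ z₄ c : R) :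
    triA (ibrB (z₁, z₂, z₃, z₄)) c = (z₄ + c, z₃ + z₂ * z₄, z₂) :=
  rfl

/-- The 1212-relation for variable changes: the path `1212 → 2122 → 212 → 121` and the
path `1212 → 1121 → 121` applied to `(z₁,z₂,z₃,z₄)` both yield
`(z₄ + z₁⁻¹, z₃ + z₂z₄, z₂)`, assuming `z₁` is invertible. -/
theorem relation_1212 (z₁ z₂ z₃ z₄ : R) [Invertible z₁] :
    ibr (slideTri (brA (z₁, z₂, z₃, z₄)) (⅟z₁)) =
      triA (ibrB (z₁, z₂, z₃, z₄)) (⅟z₁) ∧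
    ibr (slideTri (brA (z₁, z₂, z₃, z₄)) (⅟z₁)) =
      (z₄ + ⅟z₁, z₃ + z₂ * z₄, z₂) := by
  rw [ibr_slideTri_brA, triA_ibrB]
  exact ⟨rfl, rfl⟩
end
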